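/- arXiv:2006.16039 — 4 statements merged into one kernel-verified Lean document; each statement's English description precedes it below -/
import Mathlib

section
/- An n,k-history t is structured if and only if S_n(F(t)) = t. -/
/-- A list over `A × Fin k` is *basic* (for parameter `n`) if it has length at most `n`
and all its pebble indices (second components) are distinct. -/
def basic {A : Type} {k : ℕ} (n : ℕ) (l : List (A × Fin k)) : Prop :=
  l.length ≤ n ∧ (l.map Prod.snd).Nodup

instance {A : Type} {k : ℕ} (n : ℕ) (l : List (A × Fin k)) : Decidable (basic n l) := by
  unfold basic; infer_instance

/-- The length of the largest basic prefix of `s`. -/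
def lbp {A : Type} {k : ℕ} (n : ℕ) (s : List (A × Fin k)) : ℕ :=
  ((List.range (s.length + 1)).filter (fun m => decide (basic n (s.take m)))).foldr max 0

/-- The `n`-structure function `S_n`: decompose a `k`-history into its largest basic
prefix followed by the structuring of the rest. -/
def Sn {A : Type} {k : ℕ} (n : ℕ) (s : List (A × Fin k)) : List (List (A × Fin k)) :=
  if h : s.length = 0 then []
  else if basic n s then [s]
  else s.take (max 1 (lbp n s)) :: Sn n (s.drop (max 1 (lbp n s)))
termination_by s.length
decreasing_by
  have h1 : 0 < s.length := Nat.pos_of_ne_zero h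
  have h2 : 0 < max 1 (lbp n s) := lt_of_lt_of_le one_pos (le_max_left _ _)
  simp only [List.length_drop]
  omega

/-- An `n,k`-history (a list of blocks) is *structured* if for each pair of successive
blocks `s, s'`, either `s` has length exactly `n` or `s'` begins with a pair whose
pebble index occurs in `s`. -/
def structured {A : Type} {k : ℕ} (n : ℕ) (t : List (List (A × Fin k))) : Prop :=
  t.Chain' (fun s s' => s.length = n ∨ ∃ a p, s'.head? = some (a, p) ∧ p ∈ s.map Prod.snd)

/-! A block of a structured history is always the largest basic prefix of what follows it:
a nonempty basic block `b` followed by a letter `x` stops being basic exactly when `|b| = n` or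
the pebble index of `x` already occurs in `b`, which is the structuredness condition between `b`
and the next block. So `S_n` cuts `F t` precisely at the block boundaries of `t`, by induction on
the number of blocks. -/

section HistoryStructure

variable {A : Type} {k n : ℕ}

theorem basic.of_prefix {l l' : List (A × Fin k)} (h : l <+: l')
    (hb : basic n l') : basic n l :=
  ⟨h.length_le.trans hb.1, (h.sublist.map Prod.snd).nodup hb.2⟩

theorem not_basic_append_singleton_iff {b : List (A × Fin k)}
    (hb : basic n b) (x : A × Fin k) :
    ¬ basic n (b ++ [x]) ↔ b.length = n ∨ x.2 ∈ b.map Prod.snd := by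
  have hlen := hb.1
  rw [basic, List.length_append, List.map_append, List.map_singleton, List.nodup_append_comm,
    List.singleton_append, List.nodup_cons]
  simp only [hb.2, and_true, List.length_singleton, not_and_or, not_not]
  rw [show ¬b.length + 1 ≤ n ↔ b.length = n by omega]

theorem basic_take_lbp (s : List (A × Fin k)) : basic n (s.take (lbp n s)) := by
  have hzero : 0 ∈ (List.range (s.length + 1)).filter (fun m => decide (basic n (s.take m))) := by
    simp [basic]
  have hmem := List.maximum_mem (List.foldr_max_of_ne_nil (List.ne_nil_of_mem hzero)).symm
  exact of_decide_eq_true (List.mem_filter.mp hmem).2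

theorem lbp_le_length (s : List (A × Fin k)) : lbp n s ≤ s.length :=
  List.max_le_of_forall_le _ _ fun m hm => by
    simp only [List.mem_filter, List.mem_range] at hm
    omega

theorem le_lbp_iff {s : List (A × Fin k)} {m : ℕ} (hm : m ≤ s.length) :
    m ≤ lbp n s ↔ basic n (s.take m) :=
  ⟨fun h => (basic_take_lbp s).of_prefix (List.take_prefix_take_left h),
    fun h => List.le_max_of_le' 0 (by simp [Nat.lt_succ_of_le hm, h]) le_rfl⟩

theorem structured_cons_cons_iff {s r : List (A × Fin k)} {x : A × Fin k}
    {t : List (List (A × Fin k))} :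
    structured n (s :: (x :: r) :: t) ↔
      (s.length = n ∨ x.2 ∈ s.map Prod.snd) ∧ structured n ((x :: r) :: t) := by
  refine List.isChain_cons_cons.trans (and_congr_left fun _ => or_congr_right ?_)
  simp only [List.head?_cons, Option.some.injEq]
  exact ⟨fun ⟨_, _, hx, hp⟩ => hx ▸ hp, fun hp => ⟨x.1, x.2, rfl, hp⟩⟩

theorem Sn_nil : Sn n ([] : List (A × Fin k)) = [] := by
  rw [Sn, dif_pos List.length_nil]

theorem Sn_of_basic {s : List (A × Fin k)} (hs : s ≠ []) (hb : basic n s) : Sn n s = [s] := by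
  rw [Sn, dif_neg (by simpa using hs), if_pos hb]

theorem Sn_eq_take_cons_drop {s : List (A × Fin k)} (hs : s ≠ []) :
    Sn n s = s.take (max 1 (lbp n s)) :: Sn n (s.drop (max 1 (lbp n s))) := by
  by_cases hb : basic n s
  · have hL : max 1 (lbp n s) = s.length := by
      have := (le_lbp_iff le_rfl).2 (by rwa [List.take_length])
      have := lbp_le_length (n := n) s
      have := List.length_pos_iff.2 hs
      omega
    rw [Sn_of_basic hs hb, hL, List.take_length, List.drop_length, Sn_nil]
  · rw [Sn, dif_neg (by simpa using hs), if_neg hb]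

theorem Sn_append_cons_eq_cons_iff {b : List (A × Fin k)} (hb : b ≠ []) (hbb : basic n b)
    (x : A × Fin k) (r : List (A × Fin k)) (T : List (List (A × Fin k))) :
    Sn n (b ++ x :: r) = b :: T ↔ ¬ basic n (b ++ [x]) ∧ Sn n (x :: r) = T := by
  have hlen : (b ++ x :: r).length = b.length + 1 + r.length := by simp; omega
  have hb_le : b.length ≤ lbp n (b ++ x :: r) :=
    (le_lbp_iff (by omega)).2 (by rwa [List.take_left])
  have hsucc : b.length + 1 ≤ lbp n (b ++ x :: r) ↔ basic n (b ++ [x]) := by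
    rw [le_lbp_iff (by omega)]
    simp [List.take_append, List.take_of_length_le]
  have hL : max 1 (lbp n (b ++ x :: r)) = b.length ↔ ¬ basic n (b ++ [x]) := by
    have := List.length_pos_iff.2 hb
    rw [← hsucc]
    omega
  rw [Sn_eq_take_cons_drop (by simp), List.cons.injEq, ← hL]
  constructor
  · rintro ⟨htake, hT⟩
    have hmax : max 1 (lbp n (b ++ x :: r)) = b.length := by
      have := congrArg List.length htake
      rw [List.length_take] at this
      omega
    rw [hmax, List.drop_left] at hT
    exact ⟨hmax, hT⟩
  · rintro ⟨hmax, hT⟩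
    rw [hmax, List.take_left, List.drop_left]
    exact ⟨rfl, hT⟩

end HistoryStructure

theorem stmt_1_general {A : Type} {n k : ℕ}
    (t : List (List (A × Fin k)))
    (hne : ∀ l ∈ t, l ≠ []) (hbasic : ∀ l ∈ t, basic n l) :
    structured n t ↔ Sn n t.flatten = t := by
  induction t with
  | nil => exact iff_of_true List.isChain_nil (by rw [List.flatten_nil, Sn_nil])
  | cons b t ih =>
    have hb : b ≠ [] := hne b List.mem_cons_self
    have hbb := hbasic b List.mem_cons_self
    rcases t with _ | ⟨s, t⟩
    · exact iff_of_true (List.isChain_singleton b) (by simp [Sn_of_basic hb hbb])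
    · obtain ⟨x, r, rfl⟩ := List.exists_cons_of_ne_nil (hne s (by simp))
      specialize ih (fun l hl => hne l (.tail _ hl)) (fun l hl => hbasic l (.tail _ hl))
      simp only [List.flatten_cons, List.cons_append] at ih ⊢
      rw [structured_cons_cons_iff, ih,
        Sn_append_cons_eq_cons_iff hb hbb, not_basic_append_singleton_iff hbb]

/-- an `n,k`-history `t` (a list of nonempty basic blocks) is
structured if and only if `S_n (F t) = t`. -/
theorem stmt_1 {A : Type} {n k : ℕ} (hn : 1 ≤ n) (hnk : n ≤ k)
    (t : List (List (A × Fin k)))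
    (hne : ∀ l ∈ t, l ≠ []) (hbasic : ∀ l ∈ t, basic n l) :
    structured n t ↔ Sn n t.flatten = t :=
  stmt_1_general t hne hbasic
end

section
/- Let A and B be finite relational structures over a finite signature σ. If there exist bijective homomorphisms f : A → B and g : B → A, then f is an isomorphism. -/
/-- A relational signature: a type of relation symbols with arities. -/
structure Signature where
  symbols : Type
  arity : symbols → ℕ

/-- A relational structure over the signature `σ`. -/
structure Struct (σ : Signature) where
  carrier : Type
  rel : ∀ R : σ.symbols, (Fin (σ.arity R) → carrier) → Prop

/-- `f` is a homomorphism from `A` to `B`: it maps related tuples to related tuples. -/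
def IsHom {σ : Signature} (A B : Struct σ) (f : A.carrier → B.carrier) : Prop :=
  ∀ R x, A.rel R x → B.rel R (fun i => f (x i))

/-- A bijection `e` is an isomorphism between `A` and `B` if it preserves and reflects
all relations. -/
def IsIso {σ : Signature} (A B : Struct σ) (e : A.carrier ≃ B.carrier) : Prop :=
  ∀ R x, A.rel R x ↔ B.rel R (fun i => e (x i))

/-- A class of `σ`-structures is closed under isomorphisms. -/
def IsoClosed {σ : Signature} (K : Struct σ → Prop) : Prop :=
  ∀ A B : Struct σ, ∀ e : A.carrier ≃ B.carrier, IsIso A B e → K A → K B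

/-- A class of `σ`-structures is closed under bijective homomorphisms. -/
def BijHomClosed {σ : Signature} (K : Struct σ → Prop) : Prop :=
  ∀ A B : Struct σ, ∀ f : A.carrier → B.carrier,
    Function.Bijective f → IsHom A B f → K A → K B

/-- A class of `σ`-structures is closed under injective homomorphisms. -/
def InjHomClosed {σ : Signature} (K : Struct σ → Prop) : Prop :=
  ∀ A B : Struct σ, ∀ f : A.carrier → B.carrier,
    Function.Injective f → IsHom A B f → K A → K B

/-- A class of `σ`-structures is closed under surjective homomorphisms. -/
def SurjHomClosed {σ : Signature} (K : Struct σ → Prop) : Prop :=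
  ∀ A B : Struct σ, ∀ f : A.carrier → B.carrier,
    Function.Surjective f → IsHom A B f → K A → K B

/-- if `A` and `B` are finite structures over a finite signature and
there are bijective homomorphisms `f : A → B` and `g : B → A`, then `f` is an
isomorphism (it also reflects all relations, so its inverse is a homomorphism). -/
theorem stmt_13 (σ : Signature) (hσ : Finite σ.symbols) (A B : Struct σ)
    (hA : Finite A.carrier) (hB : Finite B.carrier)
    (f : A.carrier → B.carrier) (g : B.carrier → A.carrier)
    (hfb : Function.Bijective f) (hgb : Function.Bijective g)
    (hf : IsHom A B f) (hg : IsHom B A g) :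
    ∀ R x, A.rel R x ↔ B.rel R (fun i => f (x i)) := by
  intro R x
  constructor
  · intro h; exact hf R x h
  · intro h
    -- h : B.rel R (f ∘ x); apply g to get A.rel R ((g∘f) ∘ x)
    set e : A.carrier ≃ A.carrier := Equiv.ofBijective _ (hgb.comp hfb) with he
    have hhom : IsHom A A (fun a => g (f a)) := by
      intro S y hy
      exact hg S _ (hf S y hy)
    have hiter : ∀ n : ℕ, ∀ y, A.rel R y → A.rel R (fun i => (fun a => g (f a))^[n] (y i)) := by
      intro n
      induction n with
      | zero => intro y hy; simpa using hy
      | succ m ih =>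
        intro y hy
        have := hhom R _ (ih y hy)
        simpa [Function.iterate_succ_apply'] using this
    have h1 : A.rel R (fun i => g (f (x i))) := hg R _ h
    obtain ⟨n, hn, hid⟩ : ∃ n, 0 < n ∧ e ^ n = 1 := ⟨orderOf e, orderOf_pos e, pow_orderOf_eq_one e⟩
    obtain ⟨m, rfl⟩ : ∃ m, n = m + 1 := ⟨n - 1, (Nat.succ_pred_eq_of_pos hn).symm⟩
    have h2 : A.rel R (fun i => (fun a => g (f a))^[m] (g (f (x i)))) := hiter m _ h1
    have hkey : ∀ a, (fun a => g (f a))^[m] (g (f a)) = a := by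
      intro a
      have : (e ^ (m+1)) a = a := by rw [hid]; rfl
      have hco : (e ^ (m+1)) a = (fun a => g (f a))^[m+1] a := by
        rw [← Equiv.Perm.iterate_eq_pow]; rfl
      rw [hco] at this
      simpa [Function.iterate_succ_apply] using this
    simpa [hkey] using h2
end

section
/- A finite relational structure A has a tree decomposition of width k if and only if it has an extended tree decomposition of width k and arity 1. -/
/-- `le` is a tree order on `T`: a partial order with a root below everything, in which
every down-set is linearly ordered. -/
def IsTree {T : Type} (le : T → T → Prop) : Prop :=
  (∀ t, le t t) ∧
  (∀ s t, le s t → le t s → s = t) ∧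
  (∀ s t u, le s t → le t u → le s u) ∧
  (∃ r, ∀ t, le r t) ∧
  (∀ t x y, le x t → le y t → le x y ∨ le y x)

/-- A set of nodes is a (nonempty) connected subtree: it has a minimum element and
contains every node between that minimum and any of its elements. -/
def IsConnSubtree {T : Type} (le : T → T → Prop) (S : Set T) : Prop :=
  ∃ t₀ ∈ S, (∀ t ∈ S, le t₀ t) ∧ ∀ t ∈ S, ∀ x, le t₀ x → le x t → x ∈ S

/-- `(T, le, B)` is a tree decomposition of `A`: every related tuple is contained in
some bag, and the set of bags containing any element is a nonempty connected subtree. -/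
def IsTreeDecomp {σ : Signature} (A : Struct σ) {T : Type} (le : T → T → Prop)
    (B : T → Set A.carrier) : Prop :=
  IsTree le ∧
  (∀ R x, A.rel R x → ∃ t, ∀ i, x i ∈ B t) ∧
  (∀ a : A.carrier, IsConnSubtree le {t | a ∈ B t})

/-- `(T, le, β, γ)` is an extended tree decomposition of `A`: the combined bags
`β ∪ γ` form a tree decomposition, and elements of a floating bag `γ t` occur in no
bag strictly below `t`. -/
def IsExtTreeDecomp {σ : Signature} (A : Struct σ) {T : Type} (le : T → T → Prop)
    (β γ : T → Set A.carrier) : Prop :=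
  IsTreeDecomp A le (fun t => β t ∪ γ t) ∧
  ∀ (a : A.carrier) (t t' : T), a ∈ γ t → a ∈ β t' ∪ γ t' → le t t'

/-- The extended tree decomposition `(T, le, β, γ)` has arity at most `n`:
fixed bags meet the floating bag of any strictly earlier node in at most `n` elements,
and every related tuple lies in some combined bag meeting its floating part in at most
`n` elements of the tuple. -/
def ArityLE {σ : Signature} (A : Struct σ) {T : Type} (le : T → T → Prop)
    (β γ : T → Set A.carrier) (n : ℕ) : Prop :=
  (∀ t t', le t t' → t ≠ t' → (β t' ∩ γ t).ncard ≤ n) ∧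
  (∀ R x, A.rel R x →
    ∃ t, (∀ i, x i ∈ β t ∪ γ t) ∧ (Set.range x ∩ γ t).ncard ≤ n)


/-!
From a tree decomposition `(T, B)`, order the elements by the node `m a` introducing them (the
least node whose bag contains `a`), breaking ties by an enumeration. Each element `a` becomes a
node, with floating bag `{a}` and fixed bag the elements of `B (m a)` that come before `a`; these
fixed bags have lost at least `a`, and a new empty root is added on top.

Conversely, given an extended decomposition of arity 1, give every `a ∈ γ t` its own node below
`t`, with bag `insert a (β t)`. By the arity condition a subtree strictly below `t` meets `γ t`
in at most one element through its fixed bags, so it can be hung below the node of that element,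
or directly below `t` when there is none. All bags then have size at most `k + 1`.
-/

section TreeOrder

variable {T : Type}

abbrev IsTree.toPartialOrder {le : T → T → Prop} (h : IsTree le) : PartialOrder T where
  le := le
  le_refl := h.1
  le_trans := h.2.2.1
  le_antisymm := h.2.1

theorem IsTree.le_or_le {le : T → T → Prop} (h : IsTree le) {t x y : T} (hx : le x t)
    (hy : le y t) : le x y ∨ le y x :=
  h.2.2.2.2 t x y hx hy

variable [PartialOrder T]

theorem isTree_of_le (r : T) (hr : ∀ t, r ≤ t)
    (hchain : ∀ t x y : T, x ≤ t → y ≤ t → x ≤ y ∨ y ≤ x) : IsTree (fun x y : T => x ≤ y) :=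
  ⟨le_refl, fun _ _ => le_antisymm, fun _ _ _ => le_trans, ⟨r, hr⟩, hchain⟩

theorem isTree_withBot (hchain : ∀ t x y : T, x ≤ t → y ≤ t → x ≤ y ∨ y ≤ x) :
    IsTree (fun x y : WithBot T => x ≤ y) := by
  refine isTree_of_le ⊥ (fun _ => bot_le) fun t x y hx hy => ?_
  cases x with
  | bot => exact Or.inl bot_le
  | coe x =>
    cases y with
    | bot => exact Or.inr bot_le
    | coe y =>
      cases t with
      | bot => exact absurd hx (WithBot.not_coe_le_bot x)
      | coe t => simpa using hchain t x y (WithBot.coe_le_coe.mp hx) (WithBot.coe_le_coe.mp hy)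

theorem isConnSubtree_iff {S : Set T} :
    IsConnSubtree (· ≤ ·) S ↔ (∃ t₀, IsLeast S t₀) ∧ S.OrdConnected := by
  constructor
  · rintro ⟨t₀, ht₀, hlow, hconv⟩
    exact ⟨⟨t₀, ht₀, hlow⟩, ⟨fun s hs t ht x hx => hconv t ht x ((hlow s hs).trans hx.1) hx.2⟩⟩
  · rintro ⟨⟨t₀, ht₀, hlow⟩, hS⟩
    exact ⟨t₀, ht₀, hlow, fun t ht x h₀ h₁ => hS.out ht₀ ht ⟨h₀, h₁⟩⟩

variable {σ : Signature} {A : Struct σ} {B : T → Set A.carrier}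

theorem IsTreeDecomp.exists_isLeast (hB : IsTreeDecomp A (· ≤ ·) B) (a : A.carrier) :
    ∃ t, IsLeast {t | a ∈ B t} t :=
  (isConnSubtree_iff.mp (hB.2.2 a)).1

theorem IsTreeDecomp.ordConnected (hB : IsTreeDecomp A (· ≤ ·) B) (a : A.carrier) :
    {t | a ∈ B t}.OrdConnected :=
  (isConnSubtree_iff.mp (hB.2.2 a)).2

end TreeOrder

section IntroOrder

variable {C T : Type}

/-- Elements ordered by the node `m a` introducing them, ties broken by the enumeration `e`. -/
def IntroOrder (_m : C → T) (_e : C ↪ ℕ) : Type := C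

variable {m : C → T} {e : C ↪ ℕ}

instance [Finite C] : Finite (IntroOrder m e) := inferInstanceAs (Finite C)

def floatingBag : WithBot (IntroOrder m e) → Set C
  | ⊥ => ∅
  | (a : IntroOrder m e) => {a}

theorem ncard_inter_floatingBag_le_one (s : Set C) (v : WithBot (IntroOrder m e)) :
    (s ∩ floatingBag v).ncard ≤ 1 := by
  have h : (s ∩ floatingBag v).Subsingleton := by
    cases v with
    | bot => exact Set.subsingleton_empty.anti Set.inter_subset_right
    | coe a => exact Set.subsingleton_singleton.anti Set.inter_subset_right
  exact (Set.ncard_le_one h.finite).mpr fun _ ha _ hb => h ha hb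

variable [PartialOrder T]

instance : PartialOrder (IntroOrder m e) :=
  PartialOrder.lift (fun a : C => toLex (m a, e a)) fun _ _ h =>
    e.injective (congrArg Prod.snd (toLex.injective h))

namespace IntroOrder

theorem le_iff {a b : IntroOrder m e} : a ≤ b ↔ m a < m b ∨ m a = m b ∧ e a ≤ e b :=
  Prod.Lex.toLex_le_toLex

theorem map_le {a b : IntroOrder m e} (h : a ≤ b) : m a ≤ m b := by
  rcases le_iff.mp h with h | ⟨h, -⟩
  exacts [h.le, h.le]

theorem le_or_le (hT : IsTree (fun x y : T => x ≤ y)) {a b : IntroOrder m e} {t : T}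
    (ha : m a ≤ t) (hb : m b ≤ t) : a ≤ b ∨ b ≤ a := by
  rcases eq_or_ne (m a) (m b) with hab | hab
  · rcases le_total (e a) (e b) with h | h
    exacts [Or.inl (le_iff.mpr (Or.inr ⟨hab, h⟩)), Or.inr (le_iff.mpr (Or.inr ⟨hab.symm, h⟩))]
  · rcases hT.le_or_le ha hb with h | h
    exacts [Or.inl (le_iff.mpr (Or.inl (h.lt_of_ne hab))),
      Or.inr (le_iff.mpr (Or.inl (h.lt_of_ne hab.symm)))]

end IntroOrder

def fixedBag (B : T → Set C) : WithBot (IntroOrder m e) → Set C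
  | ⊥ => ∅
  | (a : IntroOrder m e) => {b : IntroOrder m e | b ∈ B (m a) ∧ b < a}

end IntroOrder

section ForwardDecomp

variable {σ : Signature} {A : Struct σ} {T : Type} [PartialOrder T] {B : T → Set A.carrier}
  {m : A.carrier → T} {e : A.carrier ↪ ℕ}

theorem mem_fixedBag_union_floatingBag (hm : ∀ c, IsLeast {t | c ∈ B t} (m c))
    {a b : IntroOrder m e} :
    b ∈ fixedBag B (a : WithBot (IntroOrder m e)) ∪ floatingBag (a : WithBot (IntroOrder m e)) ↔
      b ∈ B (m a) ∧ b ≤ a := by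
  change (b ∈ B (m a) ∧ b < a) ∨ b = a ↔ b ∈ B (m a) ∧ b ≤ a
  rw [le_iff_lt_or_eq]
  constructor
  · rintro (h | rfl)
    exacts [⟨h.1, Or.inl h.2⟩, ⟨(hm b).1, Or.inr rfl⟩]
  · rintro ⟨hb, h | rfl⟩
    exacts [Or.inl ⟨hb, h⟩, Or.inr rfl]

theorem notMem_fixedBag_union_floatingBag_bot (c : A.carrier) :
    c ∉ fixedBag B (⊥ : WithBot (IntroOrder m e)) ∪ floatingBag (⊥ : WithBot (IntroOrder m e)) :=
  fun h => h.elim id id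

theorem exists_forall_mem_fixedBag_union_floatingBag (hB : IsTreeDecomp A (· ≤ ·) B)
    (hm : ∀ c, IsLeast {t | c ∈ B t} (m c)) {n : ℕ} (x : Fin n → IntroOrder m e) {t : T}
    (hx : ∀ i, x i ∈ B t) : ∃ v : WithBot (IntroOrder m e), ∀ i,
      x i ∈ fixedBag B v ∪ floatingBag v := by
  rcases isEmpty_or_nonempty (Fin n) with hn | hn
  · exact ⟨⊥, isEmptyElim⟩
  obtain ⟨j, -, hj⟩ := Set.finite_univ.exists_maximalFor x Set.univ Set.univ_nonempty
  have hle : ∀ i, x i ≤ x j := fun i =>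
    (IntroOrder.le_or_le hB.1 ((hm _).2 (hx i)) ((hm _).2 (hx j))).elim id (hj trivial)
  refine ⟨x j, fun i => (mem_fixedBag_union_floatingBag hm).mpr ⟨?_, hle i⟩⟩
  exact (hB.ordConnected (x i)).out (hm _).1 (hx i) ⟨IntroOrder.map_le (hle i), (hm _).2 (hx j)⟩

theorem isConnSubtree_fixedBag_union_floatingBag (hB : IsTreeDecomp A (· ≤ ·) B)
    (hm : ∀ c, IsLeast {t | c ∈ B t} (m c)) (c : IntroOrder m e) :
    IsConnSubtree (· ≤ ·) {v : WithBot (IntroOrder m e) | c ∈ fixedBag B v ∪ floatingBag v} := by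
  refine ⟨c, (mem_fixedBag_union_floatingBag hm).mpr ⟨(hm c).1, le_rfl⟩, fun v hv => ?_,
    fun v hv x hcx hxv => ?_⟩
  · cases v with
    | bot => exact absurd hv (notMem_fixedBag_union_floatingBag_bot c)
    | coe a => exact WithBot.coe_le_coe.mpr ((mem_fixedBag_union_floatingBag hm).mp hv).2
  · cases v with
    | bot => exact absurd hv (notMem_fixedBag_union_floatingBag_bot c)
    | coe a =>
      cases x with
      | bot => exact absurd hcx (WithBot.not_coe_le_bot c)
      | coe x =>
        rw [WithBot.coe_le_coe] at hcx hxv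
        refine (mem_fixedBag_union_floatingBag hm).mpr ⟨?_, hcx⟩
        exact (hB.ordConnected c).out (hm c).1 ((mem_fixedBag_union_floatingBag hm).mp hv).1
          ⟨IntroOrder.map_le hcx, IntroOrder.map_le hxv⟩

theorem le_of_mem_floatingBag (hm : ∀ c, IsLeast {t | c ∈ B t} (m c)) {c : A.carrier}
    {v w : WithBot (IntroOrder m e)} (hv : c ∈ floatingBag v)
    (hw : c ∈ fixedBag B w ∪ floatingBag w) : v ≤ w := by
  cases v with
  | bot => exact bot_le
  | coe a =>
    cases w with
    | bot => exact absurd hw (notMem_fixedBag_union_floatingBag_bot c)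
    | coe b =>
      obtain rfl : c = a := hv
      exact WithBot.coe_le_coe.mpr ((mem_fixedBag_union_floatingBag hm).mp hw).2

theorem ncard_fixedBag_le {k : ℕ} (hm : ∀ c, IsLeast {t | c ∈ B t} (m c))
    (hw : ∀ t, (B t).ncard ≤ k + 1) [Finite A.carrier] (v : WithBot (IntroOrder m e)) :
    (fixedBag B v).ncard ≤ k := by
  cases v with
  | bot => simp [fixedBag]
  | coe a =>
    have hmem : a ∈ B (m a) := (hm a).1
    calc (fixedBag B (a : WithBot (IntroOrder m e))).ncard ≤ (B (m a) \ {a}).ncard :=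
          Set.ncard_le_ncard fun b hb => ⟨hb.1, hb.2.ne⟩
      _ = (B (m a)).ncard - 1 := Set.ncard_sdiff_singleton_of_mem hmem
      _ ≤ k := Nat.sub_le_of_le_add (hw (m a))

theorem IsTreeDecomp.exists_extTreeDecomp [Finite A.carrier] {k : ℕ}
    (hB : IsTreeDecomp A (· ≤ ·) B) (hw : ∀ t, (B t).ncard ≤ k + 1) :
    ∃ (T' : Type) (le : T' → T' → Prop) (β γ : T' → Set A.carrier),
      Finite T' ∧ IsExtTreeDecomp A le β γ ∧ (∀ t, (β t).ncard ≤ k) ∧ ArityLE A le β γ 1 := by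
  choose m hm using hB.exists_isLeast
  obtain ⟨e, he⟩ := Countable.exists_injective_nat A.carrier
  have hcover : ∀ R x, A.rel R x →
      ∃ v : WithBot (IntroOrder m ⟨e, he⟩), ∀ i, x i ∈ fixedBag B v ∪ floatingBag v :=
    fun R x hx => (hB.2.1 R x hx).elim fun _ ht =>
      exists_forall_mem_fixedBag_union_floatingBag hB hm x ht
  refine ⟨WithBot (IntroOrder m ⟨e, he⟩), (· ≤ ·), fixedBag B, floatingBag, inferInstance,
    ⟨⟨?_, hcover, isConnSubtree_fixedBag_union_floatingBag hB hm⟩,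
      fun _ _ _ => le_of_mem_floatingBag hm⟩,
    ncard_fixedBag_le hm hw, fun v _ _ _ => ncard_inter_floatingBag_le_one _ v,
    fun R x hx => (hcover R x hx).elim fun v hv => ⟨v, hv, ncard_inter_floatingBag_le_one _ v⟩⟩
  exact isTree_withBot fun _ _ _ hx hy =>
    IntroOrder.le_or_le hB.1 (IntroOrder.map_le hx) (IntroOrder.map_le hy)

end ForwardDecomp

section Split

variable {C T : Type}

inductive SplitNode (β γ : T → Set C) : Type
  | node : T → SplitNode β γ
  | float (t : T) (a : C) : a ∈ γ t → SplitNode β γ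

namespace SplitNode

variable {β γ : T → Set C}

def base : SplitNode β γ → T
  | node t => t
  | float t _ _ => t

def bag : SplitNode β γ → Set C
  | node t => β t
  | float t a _ => insert a (β t)

instance [Finite T] [Finite C] : Finite (SplitNode β γ) :=
  Finite.of_injective
    (fun v : SplitNode β γ => match v with
      | node t => (Sum.inl t : T ⊕ T × C)
      | float t a _ => Sum.inr (t, a))
    (by rintro (_ | ⟨_, _, _⟩) (_ | ⟨_, _, _⟩) h <;> simp_all)

theorem bag_subset (v : SplitNode β γ) : v.bag ⊆ β v.base ∪ γ v.base := by
  cases v with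
  | node t => exact Set.subset_union_left
  | float t a h => exact Set.insert_subset (Or.inr h) Set.subset_union_left

theorem fixed_subset_bag (v : SplitNode β γ) : β v.base ⊆ v.bag := by
  cases v with
  | node t => exact subset_rfl
  | float t a h => exact Set.subset_insert a (β t)

theorem exists_eq_float_of_mem_bag {v : SplitNode β γ} {c : C} (hc : c ∈ v.bag)
    (hβ : c ∉ β v.base) : ∃ t h, v = float t c h := by
  cases v with
  | node t => exact absurd hc hβ
  | float t a h =>
    obtain rfl : c = a := (Set.mem_insert_iff.mp hc).resolve_right hβ
    exact ⟨t, h, rfl⟩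

theorem exists_forall_mem_bag {n : ℕ} (x : Fin n → C) {t : T} (hx : ∀ i, x i ∈ β t ∪ γ t)
    (hγ : (Set.range x ∩ γ t).ncard ≤ 1) : ∃ v : SplitNode β γ, ∀ i, x i ∈ v.bag := by
  by_cases h : ∃ j, x j ∈ γ t
  · obtain ⟨j, hj⟩ := h
    refine ⟨float t (x j) hj, fun i => (hx i).elim (Set.mem_insert_of_mem _) fun hi => ?_⟩
    rw [(Set.ncard_le_one_iff).mp hγ ⟨⟨i, rfl⟩, hi⟩ ⟨⟨j, rfl⟩, hj⟩]
    exact Set.mem_insert _ _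
  · exact ⟨node t, fun i => (hx i).resolve_right fun hi => h ⟨i, hi⟩⟩

theorem ncard_bag_le {k : ℕ} (hw : ∀ t, (β t).ncard ≤ k) (v : SplitNode β γ) :
    v.bag.ncard ≤ k + 1 := by
  cases v with
  | node t => exact (hw t).trans k.le_succ
  | float t a h => exact (Set.ncard_insert_le a (β t)).trans (Nat.add_le_add_right (hw t) 1)

variable [PartialOrder T]

/-- `float t a _` sits just below `node t`, and `v` lies below it when `a` occurs in a fixed bag
strictly below `t` on the way to `v.base`: the subtree into which `a` continues hangs there. -/
protected def le : SplitNode β γ → SplitNode β γ → Prop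
  | node s, v => s ≤ v.base
  | float t a h, v => v = float t a h ∨ ∃ y ∈ Set.Ioc t v.base, a ∈ β y

theorem base_le_base {u v : SplitNode β γ} (h : u.le v) : u.base ≤ v.base := by
  cases u with
  | node s => exact h
  | float t a ha =>
    obtain rfl | ⟨y, hy, -⟩ := h
    exacts [le_rfl, hy.1.le.trans hy.2]

instance : PartialOrder (SplitNode β γ) where
  le := SplitNode.le
  le_refl v := by
    cases v with
    | node s => exact le_refl s
    | float t a h => exact Or.inl rfl
  le_trans u v w h₁ h₂ := by
    cases u with
    | node s => exact le_trans (α := T) h₁ (base_le_base h₂)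
    | float t a h =>
      obtain rfl | ⟨y, hy, hay⟩ := h₁
      exacts [h₂, Or.inr ⟨y, ⟨hy.1, hy.2.trans (base_le_base h₂)⟩, hay⟩]
  le_antisymm u v h₁ h₂ := by
    cases u with
    | node s =>
      cases v with
      | node s' => exact congrArg node (le_antisymm (α := T) h₁ h₂)
      | float t b hb =>
        obtain h | ⟨y, hy, -⟩ := h₂
        exacts [h, absurd h₁ (hy.1.trans_le hy.2).not_ge]
    | float t a ha =>
      obtain h | ⟨y, hy, -⟩ := h₁
      exacts [h.symm, absurd (base_le_base h₂) (hy.1.trans_le hy.2).not_ge]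

theorem base_mono : Monotone (base : SplitNode β γ → T) := fun _ _ => base_le_base

end SplitNode

end Split

section ReverseDecomp

variable {σ : Signature} {A : Struct σ} {T : Type} [PartialOrder T] {β γ : T → Set A.carrier}

namespace IsExtTreeDecomp

theorem mem_fixed_of_lt_of_le (hd : IsExtTreeDecomp A (· ≤ ·) β γ) {a : A.carrier} {t x y : T}
    (ha : a ∈ γ t) (hy : a ∈ β y) (htx : t < x) (hxy : x ≤ y) : a ∈ β x :=
  ((hd.1.ordConnected a).out (Or.inr ha) (Or.inl hy) ⟨htx.le, hxy⟩).resolve_right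
    fun hγ => htx.not_ge (hd.2 a x t hγ (Or.inr ha))

theorem exists_mem_fixed_Ioc_of_le (hd : IsExtTreeDecomp A (· ≤ ·) β γ) {a : A.carrier}
    {t x w : T} (ha : a ∈ γ t) (h : ∃ y ∈ Set.Ioc t w, a ∈ β y) (htx : t < x) (hxw : x ≤ w) :
    ∃ y ∈ Set.Ioc t x, a ∈ β y := by
  obtain ⟨y, ⟨hty, hyw⟩, hy⟩ := h
  rcases hd.1.1.le_or_le hyw hxw with hyx | hxy
  · exact ⟨y, ⟨hty, hyx⟩, hy⟩
  · exact ⟨x, ⟨htx, le_rfl⟩, hd.mem_fixed_of_lt_of_le ha hy htx hxy⟩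

theorem eq_of_exists_mem_fixed_Ioc [Finite A.carrier] (hd : IsExtTreeDecomp A (· ≤ ·) β γ)
    (har : ArityLE A (· ≤ ·) β γ 1) {a b : A.carrier} {t w : T} (ha : a ∈ γ t) (hb : b ∈ γ t)
    (ha' : ∃ y ∈ Set.Ioc t w, a ∈ β y) (hb' : ∃ y ∈ Set.Ioc t w, b ∈ β y) : a = b := by
  have key : ∀ {a b y₁ y₂}, a ∈ γ t → b ∈ γ t → t < y₁ → y₁ ≤ y₂ → a ∈ β y₁ → b ∈ β y₂ →
      a = b := fun ha hb hty₁ hy hay₁ hby₂ =>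
    (Set.ncard_le_one_iff (Set.toFinite _)).mp (har.1 t _ hty₁.le hty₁.ne) ⟨hay₁, ha⟩
      ⟨hd.mem_fixed_of_lt_of_le hb hby₂ hty₁ hy, hb⟩
  obtain ⟨y₁, ⟨hty₁, hy₁w⟩, hay₁⟩ := ha'
  obtain ⟨y₂, ⟨hty₂, hy₂w⟩, hby₂⟩ := hb'
  rcases hd.1.1.le_or_le hy₁w hy₂w with hy | hy
  exacts [key ha hb hty₁ hy hay₁ hby₂, (key hb ha hty₂ hy hby₂ hay₁).symm]

end IsExtTreeDecomp

namespace SplitNode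

theorem node_le_or_float_le (hd : IsExtTreeDecomp A (· ≤ ·) β γ) {s t : T} {b : A.carrier}
    {hb : b ∈ γ t} {w : SplitNode β γ} (hs : node s ≤ w) (ht : float t b hb ≤ w) :
    node s ≤ (float t b hb : SplitNode β γ) ∨ float t b hb ≤ (node s : SplitNode β γ) := by
  by_cases hst : s ≤ t
  · exact Or.inl hst
  have hts : t < s := ((hd.1.1.le_or_le hs (base_mono ht)).resolve_left hst).lt_of_ne
    (fun h => hst (h ▸ le_rfl))
  obtain rfl | hw := ht
  · exact absurd hs hst
  · exact Or.inr (Or.inr (hd.exists_mem_fixed_Ioc_of_le hb hw hts hs))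

theorem float_le_float_of_lt (hd : IsExtTreeDecomp A (· ≤ ·) β γ) {s t : T} {a b : A.carrier}
    {ha : a ∈ γ s} {hb : b ∈ γ t} {w : SplitNode β γ}
    (haw : ∃ y ∈ Set.Ioc s w.base, a ∈ β y) (hst : s < t) (htw : t ≤ w.base) :
    float s a ha ≤ (float t b hb : SplitNode β γ) :=
  Or.inr (hd.exists_mem_fixed_Ioc_of_le ha haw hst htw)

theorem le_or_le [Finite A.carrier] (hd : IsExtTreeDecomp A (· ≤ ·) β γ)
    (har : ArityLE A (· ≤ ·) β γ 1) {u v w : SplitNode β γ} (hu : u ≤ w) (hv : v ≤ w) :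
    u ≤ v ∨ v ≤ u := by
  cases u with
  | node s =>
    cases v with
    | node s' => exact hd.1.1.le_or_le hu hv
    | float t b hb => exact node_le_or_float_le hd hu hv
  | float s a ha =>
    cases v with
    | node s' => exact (node_le_or_float_le hd hv hu).symm
    | float t b hb =>
      obtain rfl | hu' := hu
      · exact Or.inr hv
      obtain rfl | hv' := hv
      · exact Or.inl (Or.inr hu')
      have hsw : s < w.base := hu'.elim fun y hy => hy.1.1.trans_le hy.1.2
      have htw : t < w.base := hv'.elim fun y hy => hy.1.1.trans_le hy.1.2
      by_cases hst : s = t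
      · subst hst
        obtain rfl := hd.eq_of_exists_mem_fixed_Ioc har ha hb hu' hv'
        exact Or.inl le_rfl
      rcases hd.1.1.le_or_le hsw.le htw.le with hst' | hts
      · exact Or.inl (float_le_float_of_lt hd hu' (hst'.lt_of_ne hst) htw.le)
      · exact Or.inr (float_le_float_of_lt hd hv' (hts.lt_of_ne (Ne.symm hst)) hsw.le)

theorem exists_isLeast_mem_bag (hd : IsExtTreeDecomp A (· ≤ ·) β γ) (c : A.carrier) :
    ∃ v₀, IsLeast {v : SplitNode β γ | c ∈ v.bag} v₀ := by
  obtain ⟨t₀, ht₀, hlow⟩ := hd.1.exists_isLeast c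
  by_cases hβ : c ∈ β t₀
  · exact ⟨node t₀, hβ, fun v hv => hlow (bag_subset v hv)⟩
  have hγ : c ∈ γ t₀ := ht₀.resolve_left hβ
  refine ⟨float t₀ c hγ, Set.mem_insert c _, fun v hv => ?_⟩
  have ht₀v : t₀ ≤ v.base := hlow (bag_subset v hv)
  by_cases hβv : c ∈ β v.base
  · exact Or.inr ⟨v.base, ⟨ht₀v.lt_of_ne fun h => hβ (h ▸ hβv), le_rfl⟩, hβv⟩
  obtain ⟨t, h, rfl⟩ := exists_eq_float_of_mem_bag hv hβv
  obtain rfl : t₀ = t := le_antisymm ht₀v (hd.2 c t t₀ h ht₀)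
  exact Or.inl rfl

theorem ordConnected_mem_bag (hd : IsExtTreeDecomp A (· ≤ ·) β γ) (c : A.carrier) :
    {v : SplitNode β γ | c ∈ v.bag}.OrdConnected := by
  refine ⟨fun u hu v hv x ⟨hux, hxv⟩ => ?_⟩
  have hx : c ∈ β x.base ∪ γ x.base := (hd.1.ordConnected c).out
    (bag_subset u hu) (bag_subset v hv) ⟨base_mono hux, base_mono hxv⟩
  by_cases hβ : c ∈ β x.base
  · exact fixed_subset_bag x hβ
  have hbase : u.base = x.base :=
    le_antisymm (base_mono hux) (hd.2 c _ _ (hx.resolve_left hβ) (bag_subset u hu))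
  obtain ⟨t, h, rfl⟩ := exists_eq_float_of_mem_bag hu (hbase ▸ hβ)
  obtain rfl | ⟨y, hy, -⟩ := hux
  · exact hu
  · exact absurd hbase (hy.1.trans_le hy.2).ne

end SplitNode

theorem IsExtTreeDecomp.exists_treeDecomp [Finite A.carrier] [Finite T] {k : ℕ}
    (hd : IsExtTreeDecomp A (· ≤ ·) β γ) (hw : ∀ t, (β t).ncard ≤ k)
    (har : ArityLE A (· ≤ ·) β γ 1) :
    ∃ (T' : Type) (le : T' → T' → Prop) (B : T' → Set A.carrier),
      Finite T' ∧ IsTreeDecomp A le B ∧ ∀ t, (B t).ncard ≤ k + 1 := by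
  obtain ⟨-, -, -, ⟨r, hr⟩, -⟩ := hd.1.1
  refine ⟨SplitNode β γ, (· ≤ ·), SplitNode.bag, inferInstance,
    ⟨isTree_of_le (.node r) (fun v => hr v.base) fun _ _ _ => SplitNode.le_or_le hd har,
      fun R x hx => ?_, fun c => isConnSubtree_iff.mpr
        ⟨SplitNode.exists_isLeast_mem_bag hd c, SplitNode.ordConnected_mem_bag hd c⟩⟩,
    SplitNode.ncard_bag_le hw⟩
  obtain ⟨t, hxt, hγ⟩ := har.2 R x hx
  exact SplitNode.exists_forall_mem_bag x hxt hγ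

end ReverseDecomp

/-- a finite relational structure has a tree decomposition of width `k`
(all bags of size at most `k+1`) iff it has an extended tree decomposition of width
`k` (all fixed bags of size at most `k`) and arity `1`. -/
theorem stmt_14 (σ : Signature) (A : Struct σ) (hA : Finite A.carrier) (k : ℕ) :
    (∃ (T : Type) (le : T → T → Prop) (B : T → Set A.carrier),
        Finite T ∧ IsTreeDecomp A le B ∧ ∀ t, (B t).ncard ≤ k + 1) ↔
    (∃ (T : Type) (le : T → T → Prop) (β γ : T → Set A.carrier),
        Finite T ∧ IsExtTreeDecomp A le β γ ∧ (∀ t, (β t).ncard ≤ k) ∧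
          ArityLE A le β γ 1) := by
  constructor
  · rintro ⟨T, le, B, -, hB, hw⟩
    let := hB.1.toPartialOrder
    exact hB.exists_extTreeDecomp hw
  · rintro ⟨T, le, β, γ, hT, hd, hw, har⟩
    let := hd.1.1.toPartialOrder
    exact hd.exists_treeDecomp hw har
end

section
/- Let Ψ be a Duplicator strategy for the existential k-pebble game on structures A, B, given as a function from pairs (s, p) of a k-history over A and a pebble index p ∈ [k] to functions A → B. If Ψ is n-consistent — meaning α_n(s,p) = α_n(s',p') implies Ψ(s,p) = Ψ(s',p') — then the function Ψ' on n,k-histories defined by Ψ'(t) = Ψ(F(t), p), where p is the last pebble index in t, is well-defined on structured n,k-histories; i.e., for a structured n,k-history t ending in a pair with index p, α_n(F(t), p) = t, so Ψ'(t) depends only on t. -/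
/-- `α_n (s, p)`: if the last basic block `s'` of `S_n s` has length `n` or already
contains the pebble index `p`, return `S_n s`; otherwise drop the last block. -/
def alphaN {A : Type} {k : ℕ} (n : ℕ) (s : List (A × Fin k)) (p : Fin k) :
    List (List (A × Fin k)) :=
  match (Sn n s).getLast? with
  | none => []
  | some s' =>
      if s'.length = n ∨ p ∈ s'.map Prod.snd then Sn n s else (Sn n s).dropLast

/-!
Gluing a structured history back together and re-splitting it recovers the history: a block
`s` followed by a block `s'` cannot be extended to a larger basic prefix, since either `s` is
already full or the first index of `s'` already occurs in `s`. So `S_n (F t) = t`, and the last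
block of `t` contains the last index `p`, so `α_n` does not drop it.
-/

section

variable {A : Type} {k n : ℕ}

theorem basic.sublist {l₁ l₂ : List (A × Fin k)} (h : basic n l₂) (hl : l₁.Sublist l₂) :
    basic n l₁ :=
  ⟨hl.length_le.trans h.1, h.2.sublist (hl.map Prod.snd)⟩

theorem lbp_eq_of_not_basic_take_succ {s : List (A × Fin k)} {m : ℕ} (hm : m ≤ s.length)
    (hb : basic n (s.take m)) (hnb : ¬ basic n (s.take (m + 1))) : lbp n s = m := by
  refine le_antisymm (List.max_le_of_forall_le _ _ fun j hj => ?_) (List.le_max_of_le ?_ le_rfl)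
  · rw [List.mem_filter, decide_eq_true_iff] at hj
    by_contra! hmj
    exact hnb (hj.2.sublist (List.take_prefix_take_left hmj).sublist)
  · rw [List.mem_filter, List.mem_range, decide_eq_true_iff]
    exact ⟨by omega, hb⟩

theorem Sn_append {s f : List (A × Fin k)} (hs : s ≠ []) (hb : basic n s)
    (hnb : ¬ basic n (s ++ f.take 1)) : Sn n (s ++ f) = s :: Sn n f := by
  have hlbp : lbp n (s ++ f) = s.length :=
    lbp_eq_of_not_basic_take_succ (by simp) (by rwa [List.take_left])
      (by rwa [List.take_length_add_append])
  have hnb' : ¬ basic n (s ++ f) := fun h =>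
    hnb (h.sublist ((List.take_sublist 1 f).append_left s))
  rw [Sn, dif_neg (by simp [hs]), if_neg hnb', hlbp, max_eq_right (List.length_pos_iff.mpr hs),
    List.take_left, List.drop_left]

theorem not_basic_append_take_one {s s' : List (A × Fin k)} (hs' : s' ≠ [])
    (hlink : s.length = n ∨ ∃ a p, s'.head? = some (a, p) ∧ p ∈ s.map Prod.snd) :
    ¬ basic n (s ++ s'.take 1) := by
  obtain ⟨c, s', rfl⟩ := List.exists_cons_of_ne_nil hs'
  rintro ⟨hlen, hnodup⟩
  rcases hlink with hfull | ⟨a, p, hhead, hp⟩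
  · simp [hfull] at hlen
  · simp only [List.head?_cons, Option.some.injEq] at hhead
    subst hhead
    rw [List.map_append, List.nodup_append] at hnodup
    exact hnodup.2.2 _ hp _ (List.mem_singleton_self p) rfl

theorem Sn_flatten {t : List (List (A × Fin k))} (hne : ∀ l ∈ t, l ≠ [])
    (hbasic : ∀ l ∈ t, basic n l) (hstr : structured n t) : Sn n t.flatten = t := by
  induction t with
  | nil => simp [Sn]
  | cons s rest ih =>
    have hs : s ≠ [] := hne s List.mem_cons_self
    have hsb : basic n s := hbasic s List.mem_cons_self
    cases rest with
    | nil => simpa using Sn_of_basic hs hsb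
    | cons s' rest =>
      have hs' : s' ≠ [] := hne s' (by simp)
      have htake : (s' :: rest).flatten.take 1 = s'.take 1 :=
        List.take_append_of_le_length (List.length_pos_iff.mpr hs')
      have hlink := (List.isChain_cons_cons.mp hstr).1
      rw [List.flatten_cons, Sn_append hs hsb (htake ▸ not_basic_append_take_one hs' hlink),
        ih (fun l hl => hne l (.tail _ hl)) (fun l hl => hbasic l (.tail _ hl))
          (List.IsChain.tail hstr)]

theorem alphaN_flatten {t : List (List (A × Fin k))} (hne : ∀ l ∈ t, l ≠ [])
    (hbasic : ∀ l ∈ t, basic n l) (hstr : structured n t) {a : A} {p : Fin k}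
    (hp : t.flatten.getLast? = some (a, p)) : alphaN n t.flatten p = t := by
  rcases t.eq_nil_or_concat with rfl | ⟨t, s, rfl⟩
  · simp at hp
  rw [List.concat_eq_append] at *
  have hs : s ≠ [] := hne s (by simp)
  have hlast : s.getLast? = some (a, p) := by
    rwa [List.flatten_append, List.flatten_singleton, List.getLast?_append_of_ne_nil _ hs] at hp
  have hmem : p ∈ s.map Prod.snd :=
    List.mem_map_of_mem (f := Prod.snd) (List.mem_of_getLast? hlast)
  rw [alphaN, Sn_flatten hne hbasic hstr, List.getLast?_concat]
  exact if_pos (Or.inr hmem)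

end

theorem stmt_17_general {A B : Type} {n k : ℕ}
    (Ψ : List (A × Fin k) → Fin k → (A → B))
    (hcons : ∀ s s' p p', alphaN n s p = alphaN n s' p' → Ψ s p = Ψ s' p')
    (t : List (List (A × Fin k)))
    (hne : ∀ l ∈ t, l ≠ []) (hbasic : ∀ l ∈ t, basic n l)
    (hstr : structured n t)
    (p : Fin k) (hp : ∃ a : A, t.flatten.getLast? = some (a, p)) :
    alphaN n t.flatten p = t ∧
      ∀ (s : List (A × Fin k)) (q : Fin k), alphaN n s q = t → Ψ s q = Ψ t.flatten p := by
  obtain ⟨a, ha⟩ := hp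
  have hα : alphaN n t.flatten p = t := alphaN_flatten hne hbasic hstr ha
  exact ⟨hα, fun s q hsq => hcons s t.flatten q p (hsq.trans hα.symm)⟩

/-- if `Ψ` is an `n`-consistent Duplicator strategy for the existential
`k`-pebble game, then for every nonempty structured `n,k`-history `t` ending in a pair
with pebble index `p` we have `α_n (F t, p) = t`; consequently
`Ψ' t := Ψ (F t) p` depends only on `t` (any position `(s, q)` with `α_n (s, q) = t`
gets the same response). -/
theorem stmt_17 {A B : Type} {n k : ℕ} (hn : 1 ≤ n) (hnk : n ≤ k)
    (Ψ : List (A × Fin k) → Fin k → (A → B))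
    (hcons : ∀ s s' p p', alphaN n s p = alphaN n s' p' → Ψ s p = Ψ s' p')
    (t : List (List (A × Fin k)))
    (hne : ∀ l ∈ t, l ≠ []) (hbasic : ∀ l ∈ t, basic n l)
    (hstr : structured n t) (htne : t ≠ [])
    (p : Fin k) (hp : ∃ a : A, t.flatten.getLast? = some (a, p)) :
    alphaN n t.flatten p = t ∧
      ∀ (s : List (A × Fin k)) (q : Fin k), alphaN n s q = t → Ψ s q = Ψ t.flatten p :=
  stmt_17_general Ψ hcons t hne hbasic hstr p hp
end
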